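/- arXiv:1208.5375 — 2 statements merged into one kernel-verified Lean document; each statement's English description precedes it below -/
import Mathlib

section
/- If {A_h} is an asymptotic spectral measure and {Q_h} the corresponding positive asymptotic morphism, then the asymptotic spectrum spec({A_h}) equals the asymptotic support supp({Q_h}). -/
open Filter Topology Set

noncomputable section

/-- A positive operator-valued measure on a measurable space `X`,
taking values in the bounded operators on a Hilbert space `H`. -/
structure POVM (X H : Type*) [MeasurableSpace X]
    [NormedAddCommGroup H] [InnerProductSpace ℂ H] [CompleteSpace H] where
  toFun : Set X → H →L[ℂ] H
  empty' : toFun ∅ = 0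
  pos' : ∀ s : Set X, MeasurableSet s → (toFun s).IsPositive
  additive' : ∀ Δ : ℕ → Set X, (∀ n, MeasurableSet (Δ n)) →
    Pairwise (Function.onFun Disjoint Δ) → ∀ x y : H,
      Tendsto (fun n => ∑ i ∈ Finset.range n, (inner ℂ (toFun (Δ i) x) y : ℂ))
        atTop (𝓝 (inner ℂ (toFun (⋃ i, Δ i) x) y))

variable {X H : Type*} [TopologicalSpace X] [MeasurableSpace X]
  [NormedAddCommGroup H] [InnerProductSpace ℂ H] [CompleteSpace H]

/-- The cospectrum of a positive operator-valued measure. -/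
def POVM.cospec (A : POVM X H) : Set X := ⋃₀ {U : Set X | IsOpen U ∧ A.toFun U = 0}

/-- The spectrum of a positive operator-valued measure. -/
def POVM.spec (A : POVM X H) : Set X := (A.cospec)ᶜ

/-- Regularity: the measure of any set is norm-approximated from inside by compacts. -/
def POVM.Regular (A : POVM X H) : Prop := ∀ s : Set X, MeasurableSet s → ∀ ε > 0,
  ∃ K : Set X, IsCompact K ∧ K ⊆ s ∧ ‖A.toFun s - A.toFun K‖ < ε

/-- Restriction `b ↦ A (a ∩ b)` of a positive operator-valued measure. -/
def POVM.restrict (A : POVM X H) (a : Set X) (ha : MeasurableSet a) : POVM X H where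
  toFun b := A.toFun (a ∩ b)
  empty' := by simpa using A.empty'
  pos' s hs := A.pos' _ (ha.inter hs)
  additive' Δ hΔ hd x y := by
    have h1 : (⋃ i, a ∩ Δ i) = a ∩ ⋃ i, Δ i := (Set.inter_iUnion a Δ).symm
    have := A.additive' (fun i => a ∩ Δ i) (fun i => ha.inter (hΔ i))
      (fun i j hij => Disjoint.mono inter_subset_right inter_subset_right (hd hij)) x y
    rwa [h1] at this

/-- An asymptotic spectral measure: a family of positive operator-valued measures
parameterized by `h ∈ (0,1]`, with `limsup‖A_h(X)‖ ≤ 1`, continuity in `h`, and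
asymptotic multiplicativity. -/
def ASM (A : ℝ → POVM X H) : Prop :=
  (limsup (fun h => ‖(A h).toFun univ‖) (𝓝[>] (0:ℝ)) ≤ 1) ∧
  (∀ s : Set X, IsOpen s → IsCompact (closure s) →
    ContinuousOn (fun h => (A h).toFun s) (Ioc (0:ℝ) 1)) ∧
  (∀ s t : Set X, MeasurableSet s → MeasurableSet t →
    Tendsto (fun h => ‖(A h).toFun (s ∩ t) - (A h).toFun s * (A h).toFun t‖)
      (𝓝[>] (0:ℝ)) (𝓝 0))

/-- The cospectrum of an asymptotic spectral measure. -/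
def cospecFam (A : ℝ → POVM X H) : Set X :=
  ⋃₀ {U : Set X | IsOpen U ∧ Tendsto (fun h => ‖(A h).toFun U‖) (𝓝[>] (0:ℝ)) (𝓝 0)}

/-- The spectrum of an asymptotic spectral measure. -/
def specFam (A : ℝ → POVM X H) : Set X := (cospecFam A)ᶜ

/-- Asymptotic equivalence of two asymptotic spectral measures. -/
def ASMEquiv (A B : ℝ → POVM X H) : Prop :=
  ∀ s : Set X, MeasurableSet s →
    Tendsto (fun h => ‖(A h).toFun s - (B h).toFun s‖) (𝓝[>] (0:ℝ)) (𝓝 0)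

/-- An asymptotic spectral measure has compact support if all the spectra `spec(A_h)`
are contained in one compact set. -/
def HasCompactSupportASM (A : ℝ → POVM X H) : Prop :=
  ∃ K : Set X, IsCompact K ∧ ∀ h ∈ Ioc (0:ℝ) 1, (A h).spec ⊆ K

/-- Simple functions: finite linear combinations of characteristic functions of
pre-compact open sets. -/
def S0 (X : Type*) [TopologicalSpace X] : Set (X → ℂ) :=
  {f | ∃ (n : ℕ) (c : Fin n → ℂ) (U : Fin n → Set X),
    (∀ i, IsOpen (U i) ∧ IsCompact (closure (U i))) ∧
    f = fun x => ∑ i, c i * (U i).indicator (fun _ => (1:ℂ)) x}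

/-- `B_0(X)`: the C*-algebra generated by characteristic functions of pre-compact
open sets, realized as uniform limits of the simple functions in `S0 X`. -/
def B0 (X : Type*) [TopologicalSpace X] : Set (X → ℂ) :=
  {f | ∃ g : ℕ → X → ℂ, (∀ n, g n ∈ S0 X) ∧ TendstoUniformly g f atTop}

/-- Bounded Borel functions. -/
def Bb (X : Type*) [MeasurableSpace X] : Set (X → ℂ) :=
  {f | Measurable f ∧ ∃ C : ℝ, ∀ x, ‖f x‖ ≤ C}

/-- A pointwise nonnegative (real-valued) function. -/
def NonnegFun {X : Type*} (f : X → ℂ) : Prop := ∀ x, 0 ≤ (f x).re ∧ (f x).im = 0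

/-- A positive asymptotic morphism on `B_0(X)`. -/
def PAM (Q : ℝ → (X → ℂ) →ₗ[ℂ] (H →L[ℂ] H)) : Prop :=
  (∀ h ∈ Ioc (0:ℝ) 1, ∀ f : X → ℂ, NonnegFun f → (Q h f).IsPositive) ∧
  (∀ f ∈ B0 X, ContinuousOn (fun h => Q h f) (Ioc (0:ℝ) 1)) ∧
  (∀ f ∈ B0 X, ∀ g ∈ B0 X,
    Tendsto (fun h => ‖Q h (f * g) - Q h f * Q h g‖) (𝓝[>] (0:ℝ)) (𝓝 0))

/-- A positive asymptotic morphism on the bounded Borel functions `B_b(X)`. -/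
def PAMBb (Q : ℝ → (X → ℂ) →ₗ[ℂ] (H →L[ℂ] H)) : Prop :=
  (∀ h ∈ Ioc (0:ℝ) 1, ∀ f : X → ℂ, NonnegFun f → (Q h f).IsPositive) ∧
  (∀ f ∈ Bb X, ContinuousOn (fun h => Q h f) (Ioc (0:ℝ) 1)) ∧
  (∀ f ∈ Bb X, ∀ g ∈ Bb X,
    Tendsto (fun h => ‖Q h (f * g) - Q h f * Q h g‖) (𝓝[>] (0:ℝ)) (𝓝 0))

/-- Support of a single positive morphism on `B_0(X)`. -/
def suppMor (Q : (X → ℂ) →ₗ[ℂ] (H →L[ℂ] H)) : Set X :=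
  ⋂₀ {F : Set X | IsClosed F ∧ ∀ f ∈ B0 X, tsupport f ⊆ Fᶜ → Q f = 0}

/-- Support of a single positive morphism, via its restriction to `C_0(X)`. -/
def suppMorC0 (Q : (X → ℂ) →ₗ[ℂ] (H →L[ℂ] H)) : Set X :=
  ⋂₀ {F : Set X | IsClosed F ∧ ∀ f : X → ℂ, Continuous f →
    Tendsto f (cocompact X) (𝓝 0) → tsupport f ⊆ Fᶜ → Q f = 0}

/-- Support of a positive asymptotic morphism on `B_0(X)`. -/
def suppPAM (Q : ℝ → (X → ℂ) →ₗ[ℂ] (H →L[ℂ] H)) : Set X :=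
  ⋂₀ {F : Set X | IsClosed F ∧ ∀ f ∈ B0 X, tsupport f ⊆ Fᶜ →
    Tendsto (fun h => ‖Q h f‖) (𝓝[>] (0:ℝ)) (𝓝 0)}

/-- Support of a positive asymptotic morphism on `B_b(X)`. -/
def suppPAMBb (Q : ℝ → (X → ℂ) →ₗ[ℂ] (H →L[ℂ] H)) : Set X :=
  ⋂₀ {F : Set X | IsClosed F ∧ ∀ f ∈ Bb X, tsupport f ⊆ Fᶜ →
    Tendsto (fun h => ‖Q h f‖) (𝓝[>] (0:ℝ)) (𝓝 0)}

/-- The Riesz correspondence `Q_h(f) = ∫ f dA_h`, expressed on characteristic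
functions: `Q_h(χ_Δ) = A_h(Δ)`. -/
def Corr (A : ℝ → POVM X H) (Q : ℝ → (X → ℂ) →ₗ[ℂ] (H →L[ℂ] H)) : Prop :=
  ∀ h ∈ Ioc (0:ℝ) 1, ∀ s : Set X, MeasurableSet s →
    Q h (s.indicator (fun _ => (1:ℂ))) = (A h).toFun s

/-- Uniform boundedness of a family of morphisms w.r.t. the sup norm. -/
def UnifBdd (Q : ℝ → (X → ℂ) →ₗ[ℂ] (H →L[ℂ] H)) : Prop :=
  ∃ C : ℝ, ∀ h ∈ Ioc (0:ℝ) 1, ∀ f : X → ℂ, ∀ M : ℝ,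
    (∀ x, ‖f x‖ ≤ M) → ‖Q h f‖ ≤ C * M

section PositiveMaps

variable {α H : Type*} [NormedAddCommGroup H] [InnerProductSpace ℂ H] [CompleteSpace H]
  {Φ : (α → ℂ) →ₗ[ℂ] (H →L[ℂ] H)}

lemma norm_map_le_of_nonnegFun_sub (hΦ : ∀ f, NonnegFun f → (Φ f).IsPositive)
    {w g : α → ℂ} (hw : NonnegFun w) (hwg : NonnegFun (g - w)) : ‖Φ w‖ ≤ ‖Φ g‖ := by
  have hw₀ : 0 ≤ Φ w := (ContinuousLinearMap.nonneg_iff_isPositive _).2 (hΦ w hw)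
  have hle : Φ w ≤ Φ g := by
    rw [ContinuousLinearMap.le_def, ← map_sub]
    exact hΦ _ hwg
  exact CStarAlgebra.norm_le_norm_of_nonneg_of_le hw₀ hle

lemma norm_map_ofReal_le (hΦ : ∀ f, NonnegFun f → (Φ f).IsPositive) {r b : α → ℝ}
    (hr : ∀ x, 0 ≤ r x) (hrb : ∀ x, r x ≤ b x) :
    ‖Φ (fun x => (r x : ℂ))‖ ≤ ‖Φ (fun x => (b x : ℂ))‖ :=
  norm_map_le_of_nonnegFun_sub hΦ (fun x => by simp [hr x]) (fun x => by simp [hrb x])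

lemma exists_ofReal_parts (f : α → ℂ) :
    ∃ u₁ u₂ v₁ v₂ : α → ℝ, (∀ r ∈ ({u₁, u₂, v₁, v₂} : Set (α → ℝ)), ∀ x, 0 ≤ r x ∧ r x ≤ ‖f x‖) ∧
      f = (fun x => (u₁ x : ℂ)) - (fun x => (u₂ x : ℂ))
        + Complex.I • ((fun x => (v₁ x : ℂ)) - (fun x => (v₂ x : ℂ))) := by
  have hpos : ∀ a : ℝ, a⁺ ≤ |a| := fun a =>
    (le_add_of_nonneg_right (negPart_nonneg a)).trans_eq (posPart_add_negPart a)
  have hneg : ∀ a : ℝ, a⁻ ≤ |a| := fun a =>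
    (le_add_of_nonneg_left (posPart_nonneg a)).trans_eq (posPart_add_negPart a)
  refine ⟨fun x => (f x).re⁺, fun x => (f x).re⁻, fun x => (f x).im⁺, fun x => (f x).im⁻,
    ?_, ?_⟩
  · rintro r (rfl | rfl | rfl | rfl) x
    · exact ⟨posPart_nonneg _, (hpos _).trans (Complex.abs_re_le_norm _)⟩
    · exact ⟨negPart_nonneg _, (hneg _).trans (Complex.abs_re_le_norm _)⟩
    · exact ⟨posPart_nonneg _, (hpos _).trans (Complex.abs_im_le_norm _)⟩
    · exact ⟨negPart_nonneg _, (hneg _).trans (Complex.abs_im_le_norm _)⟩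
  · funext x
    simp only [Pi.add_apply, Pi.sub_apply, Pi.smul_apply, smul_eq_mul, ← Complex.ofReal_sub,
      posPart_sub_negPart]
    rw [mul_comm]
    exact (Complex.re_add_im (f x)).symm

/-- Splitting `f` into real and imaginary, positive and negative parts. -/
theorem norm_map_le_four_mul (hΦ : ∀ f, NonnegFun f → (Φ f).IsPositive) {f : α → ℂ}
    {b : α → ℝ} (hfb : ∀ x, ‖f x‖ ≤ b x) : ‖Φ f‖ ≤ 4 * ‖Φ (fun x => (b x : ℂ))‖ := by
  obtain ⟨u₁, u₂, v₁, v₂, hparts, hf⟩ := exists_ofReal_parts f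
  have hle : ∀ r ∈ ({u₁, u₂, v₁, v₂} : Set (α → ℝ)),
      ‖Φ (fun x => (r x : ℂ))‖ ≤ ‖Φ (fun x => (b x : ℂ))‖ := fun r hr =>
    norm_map_ofReal_le hΦ (fun x => (hparts r hr x).1) fun x => (hparts r hr x).2.trans (hfb x)
  rw [hf, map_add, map_sub, map_smul, map_sub]
  grw [norm_add_le, norm_smul, Complex.norm_I, one_mul, norm_sub_le, norm_sub_le]
  linarith [hle u₁ (by simp), hle u₂ (by simp), hle v₁ (by simp), hle v₂ (by simp)]

end PositiveMaps

section SimpleFunctions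

variable {Y : Type*} [TopologicalSpace Y]

lemma exists_norm_le_of_mem_S0 {f : Y → ℂ} (hf : f ∈ S0 Y) : ∃ M, ∀ x, ‖f x‖ ≤ M := by
  obtain ⟨n, c, U, -, rfl⟩ := hf
  refine ⟨∑ i, ‖c i‖, fun x => (norm_sum_le _ _).trans (Finset.sum_le_sum fun i _ => ?_)⟩
  rw [norm_mul]
  exact mul_le_of_le_one_right (norm_nonneg _)
    (by simpa using norm_indicator_le_norm_self (fun _ => (1 : ℂ)) x)

lemma exists_norm_le_of_mem_B0 {f : Y → ℂ} (hf : f ∈ B0 Y) : ∃ M, ∀ x, ‖f x‖ ≤ M := by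
  obtain ⟨g, hg, hgf⟩ := hf
  obtain ⟨n, hn⟩ := (Metric.tendstoUniformly_iff.1 hgf 1 one_pos).exists
  obtain ⟨M, hM⟩ := exists_norm_le_of_mem_S0 (hg n)
  refine ⟨M + 1, fun x => ?_⟩
  calc ‖f x‖ ≤ ‖g n x‖ + ‖f x - g n x‖ := norm_le_norm_add_norm_sub' _ _
    _ ≤ M + 1 := add_le_add (hM x) (dist_eq_norm (f x) (g n x) ▸ hn x).le

lemma indicator_one_mem_B0 {U : Set Y} (hU : IsOpen U) (hUc : IsCompact (closure U)) :
    U.indicator (fun _ => (1 : ℂ)) ∈ B0 Y :=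
  ⟨fun _ => U.indicator (fun _ => 1),
    fun _ => ⟨1, fun _ => 1, fun _ => U, fun _ => ⟨hU, hUc⟩, by funext x; simp⟩,
    Metric.tendstoUniformly_iff.2 fun _ hε => Eventually.of_forall fun _ _ => by simpa using hε⟩

end SimpleFunctions

/-- Domination `|f| ≤ M χ_U` and positivity give `‖Q_h f‖ ≤ 4 |M| ‖A_h(U)‖`. -/
theorem tendsto_norm_of_support_subset [OpensMeasurableSpace X] {A : ℝ → POVM X H}
    {Q : ℝ → (X → ℂ) →ₗ[ℂ] (H →L[ℂ] H)}
    (hQ : ∀ h ∈ Ioc (0:ℝ) 1, ∀ f : X → ℂ, NonnegFun f → (Q h f).IsPositive)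
    (hcorr : Corr A Q) {U : Set X} (hU : IsOpen U)
    (hAU : Tendsto (fun h => ‖(A h).toFun U‖) (𝓝[>] (0:ℝ)) (𝓝 0))
    {f : X → ℂ} (hf : f ∈ B0 X) (hfU : Function.support f ⊆ U) :
    Tendsto (fun h => ‖Q h f‖) (𝓝[>] (0:ℝ)) (𝓝 0) := by
  obtain ⟨M, hM⟩ := exists_norm_le_of_mem_B0 hf
  have hfb : ∀ x, ‖f x‖ ≤ U.indicator (fun _ => M) x := fun x => by
    by_cases hx : x ∈ U
    · simpa [hx] using hM x
    · simp [hx, Function.notMem_support.1 (mt (@hfU x) hx)]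
  have hb : (fun x => ((U.indicator (fun _ => M) x : ℝ) : ℂ))
      = (M : ℂ) • U.indicator (fun _ => (1 : ℂ)) := by
    funext x
    by_cases hx : x ∈ U <;> simp [hx]
  have hbound : ∀ h ∈ Ioc (0:ℝ) 1, ‖Q h f‖ ≤ 4 * ‖M‖ * ‖(A h).toFun U‖ := fun h hh =>
    calc ‖Q h f‖ ≤ 4 * ‖Q h (fun x => ((U.indicator (fun _ => M) x : ℝ) : ℂ))‖ :=
          norm_map_le_four_mul (hQ h hh) hfb
      _ = 4 * ‖M‖ * ‖(A h).toFun U‖ := by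
          rw [hb, map_smul, hcorr h hh U hU.measurableSet, norm_smul, Complex.norm_real, mul_assoc]
  refine squeeze_zero' (Eventually.of_forall fun _ => norm_nonneg _)
    (eventually_of_mem (Ioc_mem_nhdsGT one_pos) hbound) ?_
  simpa using hAU.const_mul (4 * ‖M‖)

lemma suppPAM_subset_specFam [OpensMeasurableSpace X] {A : ℝ → POVM X H}
    {Q : ℝ → (X → ℂ) →ₗ[ℂ] (H →L[ℂ] H)}
    (hQ : ∀ h ∈ Ioc (0:ℝ) 1, ∀ f : X → ℂ, NonnegFun f → (Q h f).IsPositive)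
    (hcorr : Corr A Q) : suppPAM Q ⊆ specFam A := by
  rintro x hx ⟨U, ⟨hU, hAU⟩, hxU⟩
  refine hx Uᶜ ⟨hU.isClosed_compl, fun f hf hfU => ?_⟩ hxU
  rw [compl_compl] at hfU
  exact tendsto_norm_of_support_subset hQ hcorr hU hAU hf ((subset_tsupport f).trans hfU)

/-- A point off a closed set `F` has an open neighbourhood `V` with compact closure inside
`Fᶜ`; testing against `χ_V ∈ B₀(X)` shows `‖A_h(V)‖ = ‖Q_h(χ_V)‖ → 0`. -/
lemma mem_cospecFam_of_notMem_suppPAM [OpensMeasurableSpace X] [LocallyCompactSpace X]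
    [RegularSpace X] {A : ℝ → POVM X H} {Q : ℝ → (X → ℂ) →ₗ[ℂ] (H →L[ℂ] H)}
    (hcorr : Corr A Q) {x : X} (hx : x ∉ suppPAM Q) : x ∈ cospecFam A := by
  simp only [suppPAM, mem_sInter, not_forall] at hx
  obtain ⟨F, ⟨hF, hFQ⟩, hxF⟩ := hx
  obtain ⟨V, hV, hxV, hVF, hVc⟩ := exists_open_between_and_isCompact_closure isCompact_singleton
    hF.isOpen_compl (singleton_subset_iff.2 hxF)
  refine ⟨V, ⟨hV, ?_⟩, hxV rfl⟩
  refine (hFQ _ (indicator_one_mem_B0 hV hVc)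
    ((closure_mono support_indicator_subset).trans hVF)).congr' ?_
  filter_upwards [Ioc_mem_nhdsGT one_pos] with h hh
  rw [hcorr h hh V hV.measurableSet]

lemma specFam_subset_suppPAM [OpensMeasurableSpace X] [LocallyCompactSpace X] [RegularSpace X]
    {A : ℝ → POVM X H} {Q : ℝ → (X → ℂ) →ₗ[ℂ] (H →L[ℂ] H)} (hcorr : Corr A Q) :
    specFam A ⊆ suppPAM Q :=
  compl_subset_comm.2 fun _ => mem_cospecFam_of_notMem_suppPAM hcorr

theorem stmt15_general [BorelSpace X] [LocallyCompactSpace X] [T2Space X]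
    (A : ℝ → POVM X H) (Q : ℝ → (X → ℂ) →ₗ[ℂ] (H →L[ℂ] H))
    (hQ : PAM Q) (hcorr : Corr A Q) :
    specFam A = suppPAM Q :=
  (specFam_subset_suppPAM hcorr).antisymm (suppPAM_subset_specFam hQ.1 hcorr)

/-- For the corresponding pair `{A_h}`, `{Q_h}`, the asymptotic spectrum
`spec({A_h})` equals the asymptotic support `supp({Q_h})`. -/
theorem stmt15 [BorelSpace X] [LocallyCompactSpace X] [T2Space X]
    [TopologicalSpace.SeparableSpace H]
    (A : ℝ → POVM X H) (Q : ℝ → (X → ℂ) →ₗ[ℂ] (H →L[ℂ] H))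
    (hA : ASM A) (hQ : PAM Q) (hcorr : Corr A Q) :
    specFam A = suppPAM Q :=
  stmt15_general A Q hQ hcorr
end
end

section
/- Let {A_h} be a compactly supported asymptotic spectral measure, a a measurable set, and A_h^a(b) = A_h(a ∩ b). Then lim_{h→0} ‖∫_X f dA_h^a − A_h(a) ∫_X f dA_h‖ = 0 for every f ∈ B_0(X). -/
open Filter Topology Set

noncomputable section

variable {X H : Type*} [TopologicalSpace X] [MeasurableSpace X]
  [NormedAddCommGroup H] [InnerProductSpace ℂ H] [CompleteSpace H]

/-!
Write `D_h(f) = Q_h(χ_a f) - Q_h(χ_a) Q_h(f)`; as `Q_h(χ_a) = A_h(a)`, this is the operator in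
question, and it is linear in `f`. Since `χ_a` need not lie in `B_0(X)`, asymptotic
multiplicativity of `Q_h` does not apply directly. Instead, on an indicator `χ_U` one has
`D_h(χ_U) = A_h(a ∩ U) - A_h(a) A_h(U) → 0` by asymptotic multiplicativity of `A_h`, hence
`D_h(g) → 0` for simple `g` by linearity. Positivity of `Q_h` gives
`‖Q_h f‖ ≤ 4 ‖f‖_∞ ‖A_h(X)‖`, and `‖A_h(X)‖ ≤ 2` for small `h` because `A_h(X)` is self-adjoint
and asymptotically idempotent. So the `D_h` are eventually uniformly bounded in the sup norm,
and the convergence passes to uniform limits of simple functions, i.e. to all of `B_0(X)`.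
-/

lemma IsSelfAdjoint.norm_le_two_of_norm_sub_mul_self_le_one {𝓐 : Type*} [NormedRing 𝓐]
    [StarRing 𝓐] [CStarRing 𝓐] {T : 𝓐} (hT : IsSelfAdjoint T) (h : ‖T - T * T‖ ≤ 1) :
    ‖T‖ ≤ 2 := by
  have hsq : ‖T * T‖ = ‖T‖ * ‖T‖ := by
    simpa only [hT.star_eq] using CStarRing.norm_star_mul_self (x := T)
  have htri : ‖T * T‖ ≤ ‖T - T * T‖ + ‖T‖ := by
    simpa only [norm_sub_rev] using norm_le_norm_sub_add (T * T) T
  nlinarith [norm_nonneg T]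

lemma ContinuousLinearMap.norm_le_norm_add_of_isPositive {E : Type*} [NormedAddCommGroup E]
    [InnerProductSpace ℂ E] [CompleteSpace E] {P R : E →L[ℂ] E} (hP : P.IsPositive)
    (hR : R.IsPositive) : ‖P‖ ≤ ‖P + R‖ :=
  CStarAlgebra.norm_le_norm_of_nonneg_of_le ((nonneg_iff_isPositive P).mpr hP)
    (by simpa [le_def] using hR)

section PositiveMap

variable {α E : Type*} [NormedAddCommGroup E] [InnerProductSpace ℂ E] [CompleteSpace E]
  {Φ : (α → ℂ) →ₗ[ℂ] (E →L[ℂ] E)}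

lemma norm_map_ofReal_le_of_nonneg_of_le (hΦ : ∀ f, NonnegFun f → (Φ f).IsPositive)
    {r : α → ℝ} {M : ℝ} (hr : ∀ x, 0 ≤ r x) (hrM : ∀ x, r x ≤ M) (hM : 0 ≤ M) :
    ‖Φ (fun x => (r x : ℂ))‖ ≤ M * ‖Φ 1‖ := by
  have hsum : Φ (fun x => (r x : ℂ)) + Φ (fun x => ((M - r x : ℝ) : ℂ)) = (M : ℂ) • Φ 1 := by
    rw [← map_add, ← map_smul]
    congr 1
    ext x
    simp
  calc ‖Φ (fun x => (r x : ℂ))‖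
      ≤ ‖Φ (fun x => (r x : ℂ)) + Φ (fun x => ((M - r x : ℝ) : ℂ))‖ :=
        ContinuousLinearMap.norm_le_norm_add_of_isPositive
          (hΦ _ fun x => by simp [hr x]) (hΦ _ fun x => by simp [hrM x])
    _ = M * ‖Φ 1‖ := by rw [hsum, norm_smul, Complex.norm_real, Real.norm_of_nonneg hM]

lemma norm_map_ofReal_le_of_abs_le (hΦ : ∀ f, NonnegFun f → (Φ f).IsPositive)
    {r : α → ℝ} {M : ℝ} (hrM : ∀ x, |r x| ≤ M) (hM : 0 ≤ M) :
    ‖Φ (fun x => (r x : ℂ))‖ ≤ 2 * M * ‖Φ 1‖ := by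
  have hsplit : (fun x => (r x : ℂ)) =
      (fun x => ((max (r x) 0 : ℝ) : ℂ)) - fun x => ((max (-r x) 0 : ℝ) : ℂ) := by
    ext x
    simp only [Pi.sub_apply, ← Complex.ofReal_sub, max_zero_sub_max_neg_zero_eq_self]
  have hpos := norm_map_ofReal_le_of_nonneg_of_le hΦ (r := fun x => max (r x) 0)
    (fun x => le_max_right _ _) (fun x => max_le (le_of_abs_le (hrM x)) hM) hM
  have hneg := norm_map_ofReal_le_of_nonneg_of_le hΦ (r := fun x => max (-r x) 0)
    (fun x => le_max_right _ _) (fun x => max_le (neg_le.mp (abs_le.mp (hrM x)).1) hM) hM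
  rw [hsplit, map_sub]
  linarith [norm_sub_le (Φ fun x => ((max (r x) 0 : ℝ) : ℂ))
    (Φ fun x => ((max (-r x) 0 : ℝ) : ℂ))]

lemma norm_map_le_of_norm_le (hΦ : ∀ f, NonnegFun f → (Φ f).IsPositive)
    {f : α → ℂ} {M : ℝ} (hfM : ∀ x, ‖f x‖ ≤ M) (hM : 0 ≤ M) :
    ‖Φ f‖ ≤ 4 * M * ‖Φ 1‖ := by
  have hsplit : f = (fun x => ((f x).re : ℂ)) + Complex.I • fun x => ((f x).im : ℂ) := by
    ext x
    simp only [Pi.add_apply, Pi.smul_apply, smul_eq_mul]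
    rw [mul_comm]
    exact (Complex.re_add_im _).symm
  have hre := norm_map_ofReal_le_of_abs_le hΦ
    (fun x => (Complex.abs_re_le_norm (f x)).trans (hfM x)) hM
  have him := norm_map_ofReal_le_of_abs_le hΦ
    (fun x => (Complex.abs_im_le_norm (f x)).trans (hfM x)) hM
  rw [hsplit, map_add, map_smul]
  calc _ ≤ ‖Φ fun x => ((f x).re : ℂ)‖ + ‖Complex.I • Φ fun x => ((f x).im : ℂ)‖ :=
        norm_add_le _ _
    _ ≤ 4 * M * ‖Φ 1‖ := by rw [norm_smul, Complex.norm_I, one_mul]; linarith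

end PositiveMap

def mulDefect {α B : Type*} [Ring B] [Algebra ℂ B] (Φ : (α → ℂ) →ₗ[ℂ] B) (φ : α → ℂ) :
    (α → ℂ) →ₗ[ℂ] B :=
  Φ ∘ₗ LinearMap.mulLeft ℂ φ - LinearMap.mulLeft ℂ (Φ φ) ∘ₗ Φ

lemma mulDefect_apply {α B : Type*} [Ring B] [Algebra ℂ B] (Φ : (α → ℂ) →ₗ[ℂ] B)
    (φ f : α → ℂ) : mulDefect Φ φ f = Φ (φ * f) - Φ φ * Φ f :=
  rfl

lemma norm_mulDefect_le {α E : Type*} [NormedAddCommGroup E] [InnerProductSpace ℂ E]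
    [CompleteSpace E] {Φ : (α → ℂ) →ₗ[ℂ] (E →L[ℂ] E)}
    (hΦ : ∀ f, NonnegFun f → (Φ f).IsPositive) {φ f : α → ℂ} {M : ℝ}
    (hφ : ∀ x, ‖φ x‖ ≤ 1) (hf : ∀ x, ‖f x‖ ≤ M) (hM : 0 ≤ M) :
    ‖mulDefect Φ φ f‖ ≤ 4 * (1 + 4 * ‖Φ 1‖) * ‖Φ 1‖ * M := by
  have hφf : ‖Φ (φ * f)‖ ≤ 4 * M * ‖Φ 1‖ := norm_map_le_of_norm_le hΦ
    (fun x => by simpa [norm_mul] using mul_le_mul (hφ x) (hf x) (norm_nonneg _) zero_le_one)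
    hM
  have hφ' : ‖Φ φ‖ ≤ 4 * 1 * ‖Φ 1‖ := norm_map_le_of_norm_le hΦ hφ zero_le_one
  have hf' : ‖Φ f‖ ≤ 4 * M * ‖Φ 1‖ := norm_map_le_of_norm_le hΦ hf hM
  rw [mulDefect_apply]
  calc ‖Φ (φ * f) - Φ φ * Φ f‖ ≤ ‖Φ (φ * f)‖ + ‖Φ φ‖ * ‖Φ f‖ :=
        (norm_sub_le _ _).trans (by gcongr; exact norm_mul_le _ _)
    _ ≤ 4 * M * ‖Φ 1‖ + (4 * 1 * ‖Φ 1‖) * (4 * M * ‖Φ 1‖) := by gcongr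
    _ = 4 * (1 + 4 * ‖Φ 1‖) * ‖Φ 1‖ * M := by ring

section Approximation

variable {ι α F : Type*} [TopologicalSpace α] [NormedAddCommGroup F] [NormedSpace ℂ F]
  {l : Filter ι} {D : ι → (α → ℂ) →ₗ[ℂ] F}

lemma tendsto_zero_of_mem_S0
    (hD : ∀ U : Set α, IsOpen U → IsCompact (closure U) →
      Tendsto (fun i => D i (U.indicator fun _ => 1)) l (𝓝 0))
    {g : α → ℂ} (hg : g ∈ S0 α) : Tendsto (fun i => D i g) l (𝓝 0) := by
  obtain ⟨n, c, U, hU, rfl⟩ := hg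
  have hsum : (fun x => ∑ k, c k * (U k).indicator (fun _ => (1 : ℂ)) x) =
      ∑ k, c k • (U k).indicator fun _ => 1 := by
    ext x
    simp [Finset.sum_apply]
  simp only [hsum, map_sum, map_smul]
  simpa using tendsto_finsetSum Finset.univ fun k _ =>
    (hD (U k) (hU k).1 (hU k).2).const_smul (c k)

lemma tendsto_zero_of_mem_B0 {C : ℝ}
    (hbound : ∀ᶠ i in l, ∀ (f : α → ℂ) (M : ℝ), 0 ≤ M → (∀ x, ‖f x‖ ≤ M) → ‖D i f‖ ≤ C * M)
    (hS0 : ∀ g ∈ S0 α, Tendsto (fun i => D i g) l (𝓝 0)) {f : α → ℂ} (hf : f ∈ B0 α) :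
    Tendsto (fun i => D i f) l (𝓝 0) := by
  obtain ⟨g, hgS0, hgf⟩ := hf
  rw [Metric.tendsto_nhds]
  intro ε hε
  obtain ⟨δ, hδ, hCδ⟩ := exists_pos_mul_lt (half_pos hε) C
  obtain ⟨n, hn⟩ := (Metric.tendstoUniformly_iff.mp hgf δ hδ).exists
  filter_upwards [hbound, Metric.tendsto_nhds.mp (hS0 _ (hgS0 n)) _ (half_pos hε)]
    with i hi hgi
  rw [dist_zero_right] at hgi ⊢
  have hfg : ‖D i (f - g n)‖ ≤ C * δ :=
    hi _ δ hδ.le fun x => by simpa [dist_eq_norm] using (hn x).le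
  calc ‖D i f‖ = ‖D i (g n) + D i (f - g n)‖ := by rw [← map_add, add_sub_cancel]
    _ ≤ ‖D i (g n)‖ + ‖D i (f - g n)‖ := norm_add_le _ _
    _ < ε := by linarith

end Approximation

section AsymptoticSpectralMeasure

variable {A : ℝ → POVM X H} {Q : ℝ → (X → ℂ) →ₗ[ℂ] (H →L[ℂ] H)}

lemma ASM.eventually_norm_univ_le_two (hA : ASM A) :
    ∀ᶠ h in 𝓝[>] (0 : ℝ), ‖(A h).toFun univ‖ ≤ 2 := by
  have hidem := hA.2.2 univ univ .univ .univ
  rw [univ_inter] at hidem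
  filter_upwards [hidem.eventually_le_const zero_lt_one] with h hh
  exact ((A h).pos' univ .univ).isSelfAdjoint.norm_le_two_of_norm_sub_mul_self_le_one hh

lemma eventually_norm_mulDefect_le (hA : ASM A) (hQ : PAM Q) (hcorr : Corr A Q)
    {φ : X → ℂ} (hφ : ∀ x, ‖φ x‖ ≤ 1) :
    ∀ᶠ h in 𝓝[>] (0 : ℝ), ∀ (f : X → ℂ) (M : ℝ), 0 ≤ M → (∀ x, ‖f x‖ ≤ M) →
      ‖mulDefect (Q h) φ f‖ ≤ 72 * M := by
  filter_upwards [hA.eventually_norm_univ_le_two, Ioc_mem_nhdsGT zero_lt_one]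
    with h huniv hh f M hM hf
  have hQ1 : Q h 1 = (A h).toFun univ := by
    rw [← hcorr h hh univ .univ, indicator_univ]
    rfl
  calc ‖mulDefect (Q h) φ f‖ ≤ 4 * (1 + 4 * ‖Q h 1‖) * ‖Q h 1‖ * M :=
        norm_mulDefect_le (hQ.1 h hh) hφ hf hM
    _ ≤ 4 * (1 + 4 * 2) * 2 * M := by rw [hQ1]; gcongr
    _ = 72 * M := by ring

lemma tendsto_mulDefect_indicator (hA : ASM A) (hcorr : Corr A Q) {a U : Set X}
    (ha : MeasurableSet a) (hU : MeasurableSet U) :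
    Tendsto (fun h => mulDefect (Q h) (a.indicator fun _ => 1) (U.indicator fun _ => 1))
      (𝓝[>] (0 : ℝ)) (𝓝 0) := by
  refine tendsto_zero_iff_norm_tendsto_zero.mpr ((hA.2.2 a U ha hU).congr' ?_)
  filter_upwards [Ioc_mem_nhdsGT zero_lt_one] with h hh
  have hχ : (a.indicator fun _ => (1 : ℂ)) * U.indicator (fun _ => 1) =
      (a ∩ U).indicator fun _ => 1 :=
    inter_indicator_one.symm
  rw [mulDefect_apply, hχ, hcorr h hh _ (ha.inter hU), hcorr h hh a ha,
    hcorr h hh U hU]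

end AsymptoticSpectralMeasure

theorem stmt17_general [BorelSpace X]
    (A : ℝ → POVM X H) (Q : ℝ → (X → ℂ) →ₗ[ℂ] (H →L[ℂ] H))
    (hA : ASM A) (hQ : PAM Q) (hcorr : Corr A Q)
    (a : Set X) (ha : MeasurableSet a) :
    ∀ f ∈ B0 X,
      Tendsto (fun h => ‖Q h (a.indicator (fun _ => (1:ℂ)) * f) -
          (A h).toFun a * Q h f‖) (𝓝[>] (0:ℝ)) (𝓝 0) := by
  intro f hf
  have hχa : ∀ x, ‖a.indicator (fun _ => (1 : ℂ)) x‖ ≤ 1 := fun x =>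
    (norm_indicator_le_norm_self _ x).trans norm_one.le
  have hdefect : Tendsto (fun h => mulDefect (Q h) (a.indicator fun _ => 1) f)
      (𝓝[>] (0 : ℝ)) (𝓝 0) :=
    tendsto_zero_of_mem_B0 (eventually_norm_mulDefect_le hA hQ hcorr hχa)
      (fun _ => tendsto_zero_of_mem_S0 fun _ hU _ =>
        tendsto_mulDefect_indicator hA hcorr ha hU.measurableSet) hf
  refine (tendsto_zero_iff_norm_tendsto_zero.mp hdefect).congr' ?_
  filter_upwards [Ioc_mem_nhdsGT zero_lt_one] with h hh
  rw [mulDefect_apply, hcorr h hh a ha]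

/-- For a compactly supported asymptotic spectral measure `{A_h}` with
corresponding positive asymptotic morphism `{Q_h}` and `A_h^a(b) = A_h(a ∩ b)`, one has
`lim_{h→0}‖∫ f dA_h^a − A_h(a) ∫ f dA_h‖ = 0` for every `f ∈ B_0(X)`, where
`∫ f dA_h^a = Q_h(χ_a f)` and `∫ f dA_h = Q_h(f)`. -/
theorem stmt17 [BorelSpace X] [LocallyCompactSpace X] [T2Space X]
    [TopologicalSpace.SeparableSpace H]
    (A : ℝ → POVM X H) (Q : ℝ → (X → ℂ) →ₗ[ℂ] (H →L[ℂ] H))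
    (hA : ASM A) (hAc : HasCompactSupportASM A) (hQ : PAM Q) (hcorr : Corr A Q)
    (a : Set X) (ha : MeasurableSet a) :
    ∀ f ∈ B0 X,
      Tendsto (fun h => ‖Q h (a.indicator (fun _ => (1:ℂ)) * f) -
          (A h).toFun a * Q h f‖) (𝓝[>] (0:ℝ)) (𝓝 0) :=
  stmt17_general A Q hA hQ hcorr a ha
end
end
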